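/- arXiv:1710.03995 — 2 statements merged into one kernel-verified Lean document; each statement's English description precedes it below -/
import Mathlib

section
/- For any n×n complex matrices A and B and any k with 1 ≤ k ≤ n, the sum over i from 1 to k of σ_i(A ∘ B) is at most the sum over i from 1 to k of σ_i(A)·σ_i(B), where ∘ denotes the Hadamard (entrywise) product. -/
open Matrix Finset

/-- The `i`-th largest singular value of an `n × n` complex matrix
(indexed by `i : Fin n`, with `i = 0` the largest). -/
noncomputable def singularValue {n : ℕ} (A : Matrix (Fin n) (Fin n) ℂ) (i : Fin n) : ℝ :=
  Real.sqrt ((((Matrix.isHermitian_conjTranspose_mul_self A)).eigenvalues ∘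
    Tuple.sort ((Matrix.isHermitian_conjTranspose_mul_self A)).eigenvalues) i.rev)

/-- Euclidean norm of the `j`-th column of `Z`. -/
noncomputable def colNorm {n : ℕ} (Z : Matrix (Fin n) (Fin n) ℂ) (j : Fin n) : ℝ :=
  Real.sqrt (∑ k, ‖Z k j‖ ^ 2)

/-- The `i`-th largest column norm of `Z` (decreasingly ordered `c_i(Z)`). -/
noncomputable def colNormSorted {n : ℕ} (Z : Matrix (Fin n) (Fin n) ℂ) (i : Fin n) : ℝ :=
  (colNorm Z ∘ Tuple.sort (colNorm Z)) i.rev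

/-!
Let `A vᵢ = σᵢ uᵢ`, `B xⱼ = γⱼ wⱼ` and `(A ∘ B) fₜ = sₜ eₜ` be singular value decompositions, with
`u, v, w, x, e, f` orthonormal bases. Expanding `A = ∑ᵢ σᵢ uᵢ vᵢᴴ` and `B = ∑ⱼ γⱼ wⱼ xⱼᴴ` gives
`sₜ = ⟪eₜ, (A ∘ B) fₜ⟫ = ∑ᵢⱼ σᵢ γⱼ ⟪eₜ, uᵢ ∘ wⱼ⟫ conj ⟪fₜ, vᵢ ∘ xⱼ⟫`.
As `σ` and `γ` are nonnegative and decreasing, Abel summation in `i` and in `j` reduces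
`∑_{t ≤ r} sₜ ≤ ∑_{t ≤ r} σₜ γₜ` to bounding the real part of the partial sum over
`i ≤ p, j ≤ q, t ≤ r` by `min p q r + 1`. By AM-GM it suffices that
`∑_{i ∈ I, j ∈ J, t ∈ T} |⟪eₜ, uᵢ ∘ wⱼ⟫|² ≤ min |I| |J| |T|`, and likewise for `f, v, x`.
The bound `|I|` comes from Bessel's inequality in `t`, then `∑ⱼ |wⱼ(m)|² ≤ 1` in `j`, then
`‖uᵢ‖ = 1`; the other two follow because `⟪eₜ, uᵢ ∘ wⱼ⟫ = ∑ₘ ēₜ(m) uᵢ(m) wⱼ(m)` is symmetric in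
the three families `ē, u, w`, all of which satisfy Bessel's inequality.
-/

theorem Fin.sum_mul_le_sum_mul_of_sum_Iic_le {n : ℕ} {σ c d : Fin n → ℝ} (hσ : Antitone σ)
    (hσ₀ : ∀ i, 0 ≤ σ i) (h : ∀ p, ∑ i ∈ Iic p, c i ≤ ∑ i ∈ Iic p, d i) :
    ∑ i, σ i * c i ≤ ∑ i, σ i * d i := by
  induction n with
  | zero => simp
  | succ n ih =>
    set s := σ (Fin.last n)
    have hsplit : ∀ g : Fin (n + 1) → ℝ,
        ∑ i, σ i * g i = s * ∑ i, g i + ∑ i : Fin n, (σ i.castSucc - s) * g i.castSucc := by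
      intro g
      simp only [Fin.sum_univ_castSucc, sub_mul, Finset.sum_sub_distrib, Finset.mul_sum, mul_add]
      ring
    have hlast : ∑ i, c i ≤ ∑ i, d i := by simpa [← Fin.top_eq_last] using h (Fin.last n)
    have hinit : ∑ i : Fin n, (σ i.castSucc - s) * c i.castSucc
        ≤ ∑ i : Fin n, (σ i.castSucc - s) * d i.castSucc :=
      ih (fun i j hij => sub_le_sub_right (hσ (Fin.castSucc_le_castSucc_iff.mpr hij)) s)
        (fun i => sub_nonneg.mpr (hσ (Fin.le_last _)))
        (fun p => by simpa only [Fin.sum_Iic_castSucc] using h p.castSucc)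
    rw [hsplit, hsplit]
    gcongr
    exact hσ₀ _

theorem Fin.sum_sum_mul_le_sum_sum_mul_of_sum_Iic_le {n : ℕ} {σ γ : Fin n → ℝ}
    {c d : Fin n → Fin n → ℝ} (hσ : Antitone σ) (hσ₀ : ∀ i, 0 ≤ σ i) (hγ : Antitone γ)
    (hγ₀ : ∀ j, 0 ≤ γ j)
    (h : ∀ p q, ∑ i ∈ Iic p, ∑ j ∈ Iic q, c i j ≤ ∑ i ∈ Iic p, ∑ j ∈ Iic q, d i j) :
    ∑ i, ∑ j, σ i * γ j * c i j ≤ ∑ i, ∑ j, σ i * γ j * d i j := by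
  simp only [mul_assoc, ← Finset.mul_sum]
  refine Fin.sum_mul_le_sum_mul_of_sum_Iic_le hσ hσ₀ fun p => ?_
  rw [Finset.sum_comm, Finset.sum_comm (s := Iic p)]
  simp only [← Finset.mul_sum]
  exact Fin.sum_mul_le_sum_mul_of_sum_Iic_le hγ hγ₀ fun q =>
    Finset.sum_comm.trans_le ((h p q).trans_eq Finset.sum_comm)

theorem Fin.min_card_Iic_eq_sum_sum_ite {n : ℕ} (p q r : Fin n) :
    min (#(Iic p) : ℝ) (min #(Iic q) #(Iic r))
      = ∑ i ∈ Iic p, ∑ j ∈ Iic q, if i = j ∧ i ≤ r then (1 : ℝ) else 0 := by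
  simp_rw [ite_and, Finset.sum_ite_eq, Finset.mem_Iic]
  rw [← Finset.sum_filter, ← Finset.sum_filter, Finset.sum_const, nsmul_one]
  have h : {i ∈ {i ∈ Iic p | i ≤ q} | i ≤ r} = Iic (min p (min q r)) := by
    ext; simp [and_assoc]
  simp only [h, Fin.card_Iic, Fin.coe_min]
  push_cast
  simp only [min_add_add_right]

theorem RCLike.re_mul_star_le {𝕜 : Type*} [RCLike 𝕜] (z w : 𝕜) :
    re (z * star w) ≤ (‖z‖ ^ 2 + ‖w‖ ^ 2) / 2 := by
  have h := re_le_norm (z * star w)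
  rw [norm_mul, norm_star] at h
  nlinarith [two_mul_le_add_sq ‖z‖ ‖w‖]

section BesselFamily

variable {𝕜 : Type*} [RCLike 𝕜] {m : Type*} [Fintype m]

def IsBesselFamily {ι : Type*} (c : ι → m → 𝕜) : Prop :=
  ∀ (s : Finset ι) (z : m → 𝕜), ∑ l ∈ s, ‖z ⬝ᵥ c l‖ ^ 2 ≤ ∑ k, ‖z k‖ ^ 2

theorem Orthonormal.isBesselFamily {ι : Type*} {b : ι → EuclideanSpace 𝕜 m}
    (hb : Orthonormal 𝕜 b) : IsBesselFamily fun i => (b i).ofLp := by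
  intro s z
  simpa [EuclideanSpace.inner_eq_star_dotProduct, EuclideanSpace.norm_sq_eq,
    star_dotProduct_star, dotProduct_comm] using
    hb.sum_inner_products_le (s := s) (WithLp.toLp 2 (star z))

namespace IsBesselFamily

variable {ι : Type*} {c : ι → m → 𝕜}

theorem map_star (hc : IsBesselFamily c) : IsBesselFamily fun l => star (c l) := by
  intro s z
  have h : ∀ l, ‖z ⬝ᵥ star (c l)‖ = ‖star z ⬝ᵥ c l‖ := fun l => by
    rw [dotProduct_star, norm_star, dotProduct_comm]
  simpa only [h, Pi.star_apply, norm_star] using hc s (star z)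

theorem sum_norm_sq_apply_le_one (hc : IsBesselFamily c) (s : Finset ι) (k : m) :
    ∑ l ∈ s, ‖c l k‖ ^ 2 ≤ 1 := by
  classical
  simpa [single_one_dotProduct, Pi.single_apply, apply_ite] using hc s (Pi.single k 1)

theorem sum_norm_sq_le_one (hc : IsBesselFamily c) (l : ι) : ∑ k, ‖c l k‖ ^ 2 ≤ 1 := by
  have h : ‖star (c l) ⬝ᵥ c l‖ = ∑ k, ‖c l k‖ ^ 2 := by
    simp only [dotProduct, Pi.star_apply, RCLike.star_def, RCLike.conj_mul, ← RCLike.ofReal_pow,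
      ← RCLike.ofReal_sum, RCLike.norm_ofReal]
    exact abs_of_nonneg (by positivity)
  have hbessel := hc {l} (star (c l))
  simp only [Finset.sum_singleton, h, Pi.star_apply, norm_star] at hbessel
  nlinarith [Finset.sum_nonneg fun k (_ : k ∈ univ) => sq_nonneg ‖c l k‖]

variable {ι₁ ι₂ ι₃ : Type*}

theorem sum_sum_sum_norm_sq_le_card {a : ι₁ → m → 𝕜} {b : ι₂ → m → 𝕜} {c : ι₃ → m → 𝕜}
    (ha : IsBesselFamily a) (hb : IsBesselFamily b) (hc : IsBesselFamily c) (I : Finset ι₁)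
    (J : Finset ι₂) (L : Finset ι₃) :
    ∑ i ∈ I, ∑ j ∈ J, ∑ l ∈ L, ‖(a i * b j) ⬝ᵥ c l‖ ^ 2 ≤ #I := by
  have h : ∀ i, ∑ j ∈ J, ∑ l ∈ L, ‖(a i * b j) ⬝ᵥ c l‖ ^ 2 ≤ 1 := fun i =>
    calc ∑ j ∈ J, ∑ l ∈ L, ‖(a i * b j) ⬝ᵥ c l‖ ^ 2
        ≤ ∑ j ∈ J, ∑ k, ‖a i k‖ ^ 2 * ‖b j k‖ ^ 2 := by
          gcongr with j
          simpa only [Pi.mul_apply, norm_mul, mul_pow] using hc L (a i * b j)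
      _ = ∑ k, ‖a i k‖ ^ 2 * ∑ j ∈ J, ‖b j k‖ ^ 2 := by
          rw [Finset.sum_comm]; simp only [Finset.mul_sum]
      _ ≤ ∑ k, ‖a i k‖ ^ 2 * 1 := by
          gcongr with k; exact hb.sum_norm_sq_apply_le_one J k
      _ ≤ 1 := by simpa using ha.sum_norm_sq_le_one i
  calc _ ≤ ∑ i ∈ I, (1 : ℝ) := Finset.sum_le_sum fun i _ => h i
    _ = #I := by simp

theorem sum_sum_sum_norm_sq_le_min {a : ι₁ → m → 𝕜} {b : ι₂ → m → 𝕜} {c : ι₃ → m → 𝕜}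
    (ha : IsBesselFamily a) (hb : IsBesselFamily b) (hc : IsBesselFamily c) (I : Finset ι₁)
    (J : Finset ι₂) (L : Finset ι₃) :
    ∑ i ∈ I, ∑ j ∈ J, ∑ l ∈ L, ‖(a i * b j) ⬝ᵥ c l‖ ^ 2 ≤ min (#I : ℝ) (min #J #L) := by
  have hrot : ∀ x y z : m → 𝕜, (x * y) ⬝ᵥ z = (y * z) ⬝ᵥ x := fun x y z => by
    simp only [dotProduct, Pi.mul_apply]; exact Finset.sum_congr rfl fun _ _ => by ring
  refine le_min (sum_sum_sum_norm_sq_le_card ha hb hc I J L) (le_min ?_ ?_)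
  · calc _ = ∑ j ∈ J, ∑ l ∈ L, ∑ i ∈ I, ‖(b j * c l) ⬝ᵥ a i‖ ^ 2 := by
          rw [Finset.sum_comm]
          refine Finset.sum_congr rfl fun j _ => ?_
          rw [Finset.sum_comm]
          simp only [hrot (a _)]
      _ ≤ #J := sum_sum_sum_norm_sq_le_card hb hc ha J L I
  · calc _ = ∑ l ∈ L, ∑ i ∈ I, ∑ j ∈ J, ‖(c l * a i) ⬝ᵥ b j‖ ^ 2 := by
          rw [Finset.sum_comm (s := L)]
          refine Finset.sum_congr rfl fun i _ => ?_
          rw [Finset.sum_comm]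
          simp only [hrot (c _)]
      _ ≤ #L := sum_sum_sum_norm_sq_le_card hc ha hb L I J

theorem sum_sum_sum_re_mul_star_le_min {u v : ι₁ → m → 𝕜} {w x : ι₂ → m → 𝕜}
    {e f : ι₃ → m → 𝕜} (hu : IsBesselFamily u) (hv : IsBesselFamily v) (hw : IsBesselFamily w)
    (hx : IsBesselFamily x) (he : IsBesselFamily e) (hf : IsBesselFamily f) (I : Finset ι₁)
    (J : Finset ι₂) (L : Finset ι₃) :
    ∑ i ∈ I, ∑ j ∈ J, ∑ l ∈ L, RCLike.re ((u i * w j) ⬝ᵥ e l * star ((v i * x j) ⬝ᵥ f l))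
      ≤ min (#I : ℝ) (min #J #L) :=
  calc _ ≤ ∑ i ∈ I, ∑ j ∈ J, ∑ l ∈ L,
          (‖(u i * w j) ⬝ᵥ e l‖ ^ 2 + ‖(v i * x j) ⬝ᵥ f l‖ ^ 2) / 2 := by
        gcongr; exact RCLike.re_mul_star_le _ _
    _ = (∑ i ∈ I, ∑ j ∈ J, ∑ l ∈ L, ‖(u i * w j) ⬝ᵥ e l‖ ^ 2
          + ∑ i ∈ I, ∑ j ∈ J, ∑ l ∈ L, ‖(v i * x j) ⬝ᵥ f l‖ ^ 2) / 2 := by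
        simp only [← Finset.sum_div, Finset.sum_add_distrib]
    _ ≤ (min (#I : ℝ) (min #J #L) + min (#I : ℝ) (min #J #L)) / 2 := by
        gcongr
        · exact sum_sum_sum_norm_sq_le_min hu hw he I J L
        · exact sum_sum_sum_norm_sq_le_min hv hx hf I J L
    _ = _ := add_self_div_two _

theorem sum_Iic_sum_sum_mul_re_le {n : ℕ} {σ γ : Fin n → ℝ} (hσ : Antitone σ)
    (hσ₀ : ∀ i, 0 ≤ σ i) (hγ : Antitone γ) (hγ₀ : ∀ j, 0 ≤ γ j) {u v w x e f : Fin n → m → 𝕜}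
    (hu : IsBesselFamily u) (hv : IsBesselFamily v) (hw : IsBesselFamily w)
    (hx : IsBesselFamily x) (he : IsBesselFamily e) (hf : IsBesselFamily f) (r : Fin n) :
    ∑ t ∈ Iic r, ∑ i, ∑ j,
        σ i * γ j * RCLike.re ((u i * w j) ⬝ᵥ e t * star ((v i * x j) ⬝ᵥ f t))
      ≤ ∑ t ∈ Iic r, σ t * γ t := by
  have hpartial : ∀ p q, ∑ i ∈ Iic p, ∑ j ∈ Iic q, ∑ t ∈ Iic r,
        RCLike.re ((u i * w j) ⬝ᵥ e t * star ((v i * x j) ⬝ᵥ f t))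
      ≤ ∑ i ∈ Iic p, ∑ j ∈ Iic q, if i = j ∧ i ≤ r then (1 : ℝ) else 0 := fun p q =>
    (sum_sum_sum_re_mul_star_le_min hu hv hw hx he hf _ _ _).trans_eq
      (Fin.min_card_Iic_eq_sum_sum_ite p q r)
  calc _ = ∑ i, ∑ j, σ i * γ j * ∑ t ∈ Iic r,
          RCLike.re ((u i * w j) ⬝ᵥ e t * star ((v i * x j) ⬝ᵥ f t)) := by
        rw [Finset.sum_comm]
        refine Finset.sum_congr rfl fun i _ => ?_
        rw [Finset.sum_comm]
        simp only [Finset.mul_sum]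
    _ ≤ ∑ i, ∑ j, σ i * γ j * if i = j ∧ i ≤ r then (1 : ℝ) else 0 :=
        Fin.sum_sum_mul_le_sum_sum_mul_of_sum_Iic_le hσ hσ₀ hγ hγ₀ hpartial
    _ = _ := by
        simp_rw [ite_and, mul_ite, mul_one, mul_zero, Finset.sum_ite_eq, Finset.mem_univ, if_true]
        rw [← Finset.sum_filter, Finset.filter_ge_eq_Iic]

end IsBesselFamily

end BesselFamily

theorem exists_orthonormalBasis_eq_norm_smul {𝕜 : Type*} [RCLike 𝕜] {F : Type*}
    [NormedAddCommGroup F] [InnerProductSpace 𝕜 F] [FiniteDimensional 𝕜 F]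
    {ι : Type*} [Fintype ι] (hcard : Module.finrank 𝕜 F = Fintype.card ι) {y : ι → F}
    (hy : Pairwise fun i j => inner 𝕜 (y i) (y j) = 0) :
    ∃ U : OrthonormalBasis ι 𝕜 F, ∀ i, y i = (‖y i‖ : 𝕜) • U i := by
  set s : Set ι := {i | y i ≠ 0}
  set v : ι → F := fun i => (‖y i‖ : 𝕜)⁻¹ • y i
  have hv : Orthonormal 𝕜 (s.domRestrict v) := by
    refine ⟨fun i => norm_smul_inv_norm i.2, fun i j hij => ?_⟩
    simp only [Set.domRestrict_apply, v, inner_smul_left, inner_smul_right,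
      hy (Subtype.coe_ne_coe.mpr hij), mul_zero]
  obtain ⟨U, hU⟩ := hv.exists_orthonormalBasis_extension_of_card_eq hcard
  refine ⟨U, fun i => ?_⟩
  by_cases hi : y i = 0
  · simp [hi]
  · rw [hU i hi, smul_inv_smul₀ (by simpa using hi)]

namespace Matrix

variable {𝕜 : Type*} [RCLike 𝕜]

theorem inner_toLp_mulVec_toLp_mulVec {m n : Type*} [Fintype m] [Fintype n]
    (A : Matrix m n 𝕜) (a b : n → 𝕜) :
    inner 𝕜 (WithLp.toLp 2 (A *ᵥ a)) (WithLp.toLp 2 (A *ᵥ b))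
      = inner 𝕜 (WithLp.toLp 2 a) (WithLp.toLp 2 ((Aᴴ * A) *ᵥ b)) := by
  simp only [EuclideanSpace.inner_toLp_toLp, star_mulVec]
  rw [dotProduct_comm, dotProduct_mulVec, vecMul_vecMul, ← dotProduct_mulVec, dotProduct_comm]

theorem eq_sum_smul_vecMulVec_star {m n ι : Type*} [Fintype n] [DecidableEq n] [Fintype ι]
    {A : Matrix m n 𝕜} {U : ι → m → 𝕜} (V : OrthonormalBasis ι 𝕜 (EuclideanSpace 𝕜 n))
    {σ : ι → 𝕜} (h : ∀ i, A *ᵥ V i = σ i • U i) :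
    A = ∑ i, σ i • vecMulVec (U i) (star ⇑(V i)) := by
  ext a b
  have hcol : A a b = (A *ᵥ (EuclideanSpace.single b (1 : 𝕜)).ofLp) a := by simp
  rw [hcol, ← V.sum_repr' (EuclideanSpace.single b 1)]
  simp only [EuclideanSpace.inner_single_right, one_mul, WithLp.ofLp_sum, WithLp.ofLp_smul,
    mulVec_sum, mulVec_smul, h, Finset.sum_apply, Pi.smul_apply, smul_eq_mul, sum_apply,
    smul_apply, vecMulVec_apply, Pi.star_apply, RCLike.star_def]
  exact Finset.sum_congr rfl fun i _ => by ring

theorem dotProduct_hadamard_mulVec {R : Type*} [CommSemiring R] [StarRing R]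
    {m n ι κ : Type*} [Fintype m] [Fintype n] [Fintype ι] [Fintype κ]
    (σ : ι → R) (u : ι → m → R) (v : ι → n → R) (γ : κ → R) (w : κ → m → R) (x : κ → n → R)
    (e : m → R) (f : n → R) :
    e ⬝ᵥ ((∑ i, σ i • vecMulVec (u i) (star (v i))) ⊙ (∑ j, γ j • vecMulVec (w j) (star (x j)))
        *ᵥ f)
      = ∑ i, ∑ j, σ i * γ j * ((u i * w j) ⬝ᵥ e * star ((v i * x j) ⬝ᵥ star f)) := by
  have hsum : (∑ i, σ i • vecMulVec (u i) (star (v i)))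
        ⊙ (∑ j, γ j • vecMulVec (w j) (star (x j)))
      = ∑ i, ∑ j, (σ i • vecMulVec (u i) (star (v i))) ⊙ (γ j • vecMulVec (w j) (star (x j))) := by
    ext a b
    simp only [hadamard_apply, Matrix.sum_apply, Finset.sum_mul_sum]
  rw [hsum, sum_mulVec, dotProduct_sum]
  refine Finset.sum_congr rfl fun i _ => ?_
  rw [sum_mulVec, dotProduct_sum]
  refine Finset.sum_congr rfl fun j _ => ?_
  simp only [dotProduct, mulVec, hadamard_apply, smul_apply, vecMulVec_apply, Pi.mul_apply,
    Pi.star_apply, star_sum, star_mul', star_star, smul_eq_mul, Finset.mul_sum, Finset.sum_mul]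
  rw [Finset.sum_comm]
  exact Finset.sum_congr rfl fun _ _ => Finset.sum_congr rfl fun _ _ => by ring

end Matrix

theorem singularValue_nonneg {n : ℕ} (A : Matrix (Fin n) (Fin n) ℂ) (i : Fin n) :
    0 ≤ singularValue A i :=
  Real.sqrt_nonneg _

theorem singularValue_antitone {n : ℕ} (A : Matrix (Fin n) (Fin n) ℂ) :
    Antitone (singularValue A) := fun _ _ h =>
  Real.sqrt_le_sqrt (Tuple.monotone_sort _ (Fin.rev_le_rev.mpr h))

theorem exists_orthonormalBasis_mulVec_eq_singularValue_smul {n : ℕ}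
    (A : Matrix (Fin n) (Fin n) ℂ) :
    ∃ U V : OrthonormalBasis (Fin n) ℂ (EuclideanSpace ℂ (Fin n)),
      ∀ i, A *ᵥ V i = (singularValue A i : ℂ) • U i := by
  set hH := isHermitian_conjTranspose_mul_self A
  set τ : Equiv.Perm (Fin n) := Fin.revPerm.trans (Tuple.sort hH.eigenvalues)
  set V := hH.eigenvectorBasis.reindex τ.symm
  have hV : ∀ i, (Aᴴ * A) *ᵥ V i = (hH.eigenvalues (τ i) : ℂ) • V i := fun i => by
    simpa only [V, OrthonormalBasis.reindex_apply, Equiv.symm_symm, Complex.coe_smul] using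
      hH.mulVec_eigenvectorBasis (τ i)
  have hinner : ∀ i j, inner ℂ (WithLp.toLp 2 (A *ᵥ V i)) (WithLp.toLp 2 (A *ᵥ V j))
      = (hH.eigenvalues (τ j) : ℂ) * inner ℂ (V i) (V j) := fun i j => by
    rw [inner_toLp_mulVec_toLp_mulVec, hV, WithLp.toLp_smul, inner_smul_right]
  obtain ⟨U, hU⟩ := exists_orthonormalBasis_eq_norm_smul (𝕜 := ℂ) (by simp)
    (y := fun i => WithLp.toLp 2 (A *ᵥ V i))
    fun i j hij => by simp [hinner, V.orthonormal.inner_eq_zero hij]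
  refine ⟨U, V, fun i => ?_⟩
  have hnorm : ‖WithLp.toLp 2 (A *ᵥ V i)‖ = singularValue A i := by
    rw [norm_eq_sqrt_re_inner (𝕜 := ℂ), hinner, orthonormal_iff_ite.mp V.orthonormal i i]
    simp [singularValue, τ]
  have h := congrArg WithLp.ofLp (hU i)
  rw [hnorm, WithLp.ofLp_smul] at h
  exact h

theorem singularValue_hadamard_eq_sum_sum {n : ℕ} {A B : Matrix (Fin n) (Fin n) ℂ}
    {U V W X E F : OrthonormalBasis (Fin n) ℂ (EuclideanSpace ℂ (Fin n))}
    (hA : ∀ i, A *ᵥ V i = (singularValue A i : ℂ) • U i)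
    (hB : ∀ j, B *ᵥ X j = (singularValue B j : ℂ) • W j)
    (hAB : ∀ t, (A ⊙ B) *ᵥ F t = (singularValue (A ⊙ B) t : ℂ) • E t) (t : Fin n) :
    singularValue (A ⊙ B) t = ∑ i, ∑ j, singularValue A i * singularValue B j *
      RCLike.re ((⇑(U i) * ⇑(W j)) ⬝ᵥ star ⇑(E t) * star ((⇑(V i) * ⇑(X j)) ⬝ᵥ star ⇑(F t))) := by
  have hexp := dotProduct_hadamard_mulVec (fun i => (singularValue A i : ℂ)) (fun i => ⇑(U i))
    (fun i => ⇑(V i)) (fun j => (singularValue B j : ℂ)) (fun j => ⇑(W j)) (fun j => ⇑(X j))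
    (star ⇑(E t)) ⇑(F t)
  rw [← eq_sum_smul_vecMulVec_star V hA, ← eq_sum_smul_vecMulVec_star X hB, hAB t,
    dotProduct_smul, dotProduct_comm, ← EuclideanSpace.inner_eq_star_dotProduct,
    orthonormal_iff_ite.mp E.orthonormal t t, if_pos rfl, smul_eq_mul, mul_one] at hexp
  simpa [Complex.re_sum, ← Complex.ofReal_mul, Complex.re_ofReal_mul] using
    congrArg Complex.re hexp

theorem kyFan_singularValue_hadamard {n : ℕ} (A B : Matrix (Fin n) (Fin n) ℂ)
    (k : ℕ) (hk1 : 1 ≤ k) (hkn : k ≤ n) :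
    ∑ i ∈ Finset.univ.filter (fun i : Fin n => (i : ℕ) < k),
        singularValue (Matrix.hadamard A B) i ≤
      ∑ i ∈ Finset.univ.filter (fun i : Fin n => (i : ℕ) < k),
        singularValue A i * singularValue B i := by
  obtain ⟨U, V, hA⟩ := exists_orthonormalBasis_mulVec_eq_singularValue_smul A
  obtain ⟨W, X, hB⟩ := exists_orthonormalBasis_mulVec_eq_singularValue_smul B
  obtain ⟨E, F, hAB⟩ := exists_orthonormalBasis_mulVec_eq_singularValue_smul (A ⊙ B)
  obtain ⟨r, hr⟩ : ∃ r : Fin n, Finset.univ.filter (fun i : Fin n => (i : ℕ) < k) = Iic r :=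
    ⟨⟨k - 1, by omega⟩, by
      ext i
      simp only [Finset.mem_filter, Finset.mem_univ, true_and, Finset.mem_Iic, Fin.le_def]
      omega⟩
  simp only [hr, singularValue_hadamard_eq_sum_sum hA hB hAB]
  exact IsBesselFamily.sum_Iic_sum_sum_mul_re_le (singularValue_antitone A)
    (singularValue_nonneg A) (singularValue_antitone B) (singularValue_nonneg B)
    U.orthonormal.isBesselFamily V.orthonormal.isBesselFamily W.orthonormal.isBesselFamily
    X.orthonormal.isBesselFamily E.orthonormal.isBesselFamily.map_star
    F.orthonormal.isBesselFamily.map_star r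
end

section
/- For n×n complex matrices A and B, the largest singular value of the Fan product satisfies σ_1(A ⋆ B) ≤ σ_1(A)·σ_1(B), where (A ⋆ B)_ij = −a_ii b_ii if i = j and a_ij b_ij otherwise. -/
/-!
Both singular values are L2 operator norms: the largest eigenvalue of `Mᴴ * M` is
`‖Mᴴ * M‖ = ‖M‖ ^ 2` by the C⋆-identity. Since `|(A ⋆ B) i j| = |A i j| |B i j|`, it remains to
see that entrywise domination `|C i j| ≤ |A i j| |B i j|` gives `‖C‖ ≤ ‖A‖ ‖B‖`: by Cauchy–Schwarz
on row `i`, `|(C x) i|² ≤ (∑ⱼ |B i j|²) (∑ⱼ |A i j|² |x j|²)`, the rows of `B` have norm at most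
`‖B‖`, and summing over `i` leaves the column norms of `A`, which are at most `‖A‖`.
-/

open Matrix Finset

/-- The Fan product. -/
def fanProduct {n : ℕ} (A B : Matrix (Fin n) (Fin n) ℂ) : Matrix (Fin n) (Fin n) ℂ :=
  Matrix.of fun i j => if i = j then -(A i i * B i i) else A i j * B i j

open scoped Matrix.Norms.L2Operator MatrixOrder ComplexOrder

theorem Tuple.apply_le_comp_sort_rev_zero {α : Type*} [LinearOrder α] {n : ℕ} (hn : 0 < n)
    (f : Fin n → α) (j : Fin n) : f j ≤ (f ∘ Tuple.sort f) (Fin.rev ⟨0, hn⟩) := by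
  have hlast : (Tuple.sort f)⁻¹ j ≤ Fin.rev ⟨0, hn⟩ := by
    simp only [Fin.le_def, Fin.val_rev]
    omega
  simpa using Tuple.monotone_sort f hlast

namespace Matrix

variable {m n 𝕜 : Type*} [Fintype m] [Fintype n] [DecidableEq n] [RCLike 𝕜]

theorem sum_norm_sq_col_le_l2_opNorm_sq (A : Matrix m n 𝕜) (j : n) :
    ∑ i, ‖A i j‖ ^ 2 ≤ ‖A‖ ^ 2 := by
  have h := A.l2_opNorm_mulVec (EuclideanSpace.single j 1)
  rw [← sq_le_sq₀ (norm_nonneg _) (by positivity), EuclideanSpace.norm_sq_eq] at h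
  simpa using h

theorem sum_norm_sq_row_le_l2_opNorm_sq [DecidableEq m] (A : Matrix m n 𝕜) (i : m) :
    ∑ j, ‖A i j‖ ^ 2 ≤ ‖A‖ ^ 2 := by
  simpa [l2_opNorm_conjTranspose] using Aᴴ.sum_norm_sq_col_le_l2_opNorm_sq i

section EntrywiseDomination

variable [DecidableEq m] {A B C : Matrix m n 𝕜}

theorem norm_sq_mulVec_apply_le (h : ∀ i j, ‖C i j‖ ≤ ‖A i j‖ * ‖B i j‖) (x : n → 𝕜) (i : m) :
    ‖(C *ᵥ x) i‖ ^ 2 ≤ ‖B‖ ^ 2 * ∑ j, ‖A i j‖ ^ 2 * ‖x j‖ ^ 2 :=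
  calc ‖(C *ᵥ x) i‖ ^ 2 ≤ (∑ j, ‖B i j‖ * (‖A i j‖ * ‖x j‖)) ^ 2 := by
        gcongr
        refine (norm_sum_le _ _).trans (Finset.sum_le_sum fun j _ => ?_)
        rw [norm_mul, ← mul_assoc, mul_comm ‖B i j‖]
        gcongr
        exact h i j
    _ ≤ (∑ j, ‖B i j‖ ^ 2) * ∑ j, (‖A i j‖ * ‖x j‖) ^ 2 := Finset.sum_mul_sq_le_sq_mul_sq _ _ _
    _ ≤ ‖B‖ ^ 2 * ∑ j, ‖A i j‖ ^ 2 * ‖x j‖ ^ 2 := by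
        simp_rw [mul_pow]
        gcongr
        exact B.sum_norm_sq_row_le_l2_opNorm_sq i

theorem sum_norm_sq_mulVec_le (h : ∀ i j, ‖C i j‖ ≤ ‖A i j‖ * ‖B i j‖) (x : n → 𝕜) :
    ∑ i, ‖(C *ᵥ x) i‖ ^ 2 ≤ (‖A‖ * ‖B‖) ^ 2 * ∑ j, ‖x j‖ ^ 2 :=
  calc ∑ i, ‖(C *ᵥ x) i‖ ^ 2 ≤ ∑ i, ‖B‖ ^ 2 * ∑ j, ‖A i j‖ ^ 2 * ‖x j‖ ^ 2 :=
        Finset.sum_le_sum fun i _ => norm_sq_mulVec_apply_le h x i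
    _ = ‖B‖ ^ 2 * ∑ j, (∑ i, ‖A i j‖ ^ 2) * ‖x j‖ ^ 2 := by
        simp_rw [← Finset.mul_sum, Finset.sum_mul]
        rw [Finset.sum_comm]
    _ ≤ ‖B‖ ^ 2 * ∑ j, ‖A‖ ^ 2 * ‖x j‖ ^ 2 := by
        gcongr with j
        exact A.sum_norm_sq_col_le_l2_opNorm_sq j
    _ = (‖A‖ * ‖B‖) ^ 2 * ∑ j, ‖x j‖ ^ 2 := by
        rw [← Finset.mul_sum]
        ring

theorem l2_opNorm_le_mul_of_norm_apply_le (h : ∀ i j, ‖C i j‖ ≤ ‖A i j‖ * ‖B i j‖) :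
    ‖C‖ ≤ ‖A‖ * ‖B‖ := by
  rw [l2_opNorm_def]
  refine ContinuousLinearMap.opNorm_le_bound _ (by positivity) fun x => ?_
  rw [← sq_le_sq₀ (norm_nonneg _) (by positivity), mul_pow, EuclideanSpace.norm_sq_eq,
    EuclideanSpace.norm_sq_eq]
  exact sum_norm_sq_mulVec_le h x

end EntrywiseDomination

theorem IsHermitian.eigenvalues_le_l2_opNorm {H : Matrix n n 𝕜} (hH : H.IsHermitian) (i : n) :
    hH.eigenvalues i ≤ ‖H‖ := by
  have : Nonempty n := ⟨i⟩
  have hmem : (hH.eigenvalues i : 𝕜) ∈ spectrum 𝕜 H := by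
    rw [hH.spectrum_eq_image_range]
    exact ⟨_, ⟨i, rfl⟩, rfl⟩
  calc hH.eigenvalues i ≤ ‖(hH.eigenvalues i : 𝕜)‖ := by simpa using le_abs_self _
    _ ≤ ‖H‖ := spectrum.norm_le_norm_of_mem hmem

theorem PosSemidef.exists_eigenvalues_eq_l2_opNorm [Nonempty n] {H : Matrix n n ℂ}
    (hH : H.PosSemidef) : ∃ i, hH.isHermitian.eigenvalues i = ‖H‖ := by
  rw [← Set.mem_range, ← hH.isHermitian.spectrum_real_eq_range_eigenvalues]
  exact CStarAlgebra.norm_mem_spectrum_of_nonneg (nonneg_iff_posSemidef.mpr hH)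

end Matrix

theorem singularValue_zero_eq_l2_opNorm {n : ℕ} (hn : 0 < n) (M : Matrix (Fin n) (Fin n) ℂ) :
    singularValue M ⟨0, hn⟩ = ‖M‖ := by
  have : Nonempty (Fin n) := ⟨⟨0, hn⟩⟩
  have hH := isHermitian_conjTranspose_mul_self M
  obtain ⟨i, hi⟩ := (posSemidef_conjTranspose_mul_self M).exists_eigenvalues_eq_l2_opNorm
  have hmax : (hH.eigenvalues ∘ Tuple.sort hH.eigenvalues) (Fin.rev ⟨0, hn⟩) = ‖Mᴴ * M‖ :=
    le_antisymm (hH.eigenvalues_le_l2_opNorm _)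
      (hi ▸ Tuple.apply_le_comp_sort_rev_zero hn hH.eigenvalues i)
  rw [singularValue, hmax, l2_opNorm_conjTranspose_mul_self, Real.sqrt_mul_self (norm_nonneg M)]

theorem norm_fanProduct_apply {n : ℕ} (A B : Matrix (Fin n) (Fin n) ℂ) (i j : Fin n) :
    ‖fanProduct A B i j‖ = ‖A i j‖ * ‖B i j‖ := by
  by_cases h : i = j <;> simp [fanProduct, h]

theorem fanProduct_opNorm_le {n : ℕ} (hn : 0 < n) (A B : Matrix (Fin n) (Fin n) ℂ) :
    singularValue (fanProduct A B) ⟨0, hn⟩ ≤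
      singularValue A ⟨0, hn⟩ * singularValue B ⟨0, hn⟩ := by
  simp only [singularValue_zero_eq_l2_opNorm]
  exact Matrix.l2_opNorm_le_mul_of_norm_apply_le fun i j => (norm_fanProduct_apply A B i j).le
end
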